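/- Suppose Ā = [[A, A^∂],[0, I]] is monotone (invertible with entrywise nonnegative inverse) and ξ + A^{-1}A^∂ξ^∂ ≥ 0 entrywise, where ξ, ξ^∂ are all-ones vectors. If the vectors u_b, u_b^∂ satisfy A u_b + A^∂ u_b^∂ = F with F ≤ 0 entrywise, then max_i u_{b,i} ≤ max{0, max_i u^∂_{b,i}}. -/
import Mathlib


open Matrix

/-- Ciarlet's criterion for the discrete maximum principle: if
`Ā = [[A, A∂],[0, I]]` is monotone and `ξ + A⁻¹A∂ξ∂ ≥ 0` entrywise (`ξ, ξ∂`
all-ones vectors), and `A u_b + A∂ u_b∂ = F` with `F ≤ 0` entrywise, then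
`max_i u_{b,i} ≤ max{0, max_i u∂_{b,i}}`. -/
theorem stmt_9 (m k : ℕ)
    (A : Matrix (Fin m) (Fin m) ℝ)
    (Ad : Matrix (Fin m) (Fin k) ℝ)
    (Abar : Matrix (Fin m ⊕ Fin k) (Fin m ⊕ Fin k) ℝ)
    (hAbar : Abar = Matrix.fromBlocks A Ad 0 1)
    (hmono₁ : IsUnit Abar) (hmono₂ : ∀ i j, 0 ≤ Abar⁻¹ i j)
    (hxi : ∀ i, 0 ≤ (fun _ => (1:ℝ)) i + (A⁻¹ *ᵥ (Ad *ᵥ fun _ => (1:ℝ))) i)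
    (ub : Fin m → ℝ) (ubd : Fin k → ℝ) (F : Fin m → ℝ)
    (hsys : A *ᵥ ub + Ad *ᵥ ubd = F) (hF : ∀ i, F i ≤ 0) :
    ∀ i, ub i ≤ max 0 (⨆ j, ubd j) := by
  intro i
  set c : ℝ := max 0 (⨆ j, ubd j) with hc
  have hc0 : (0:ℝ) ≤ c := le_max_left _ _
  have hcub : ∀ j, ubd j ≤ c := by
    intro j
    exact le_trans (le_ciSup (Set.Finite.bddAbove (Set.finite_range ubd)) j)
      (le_max_right _ _)
  -- A is invertible
  have hdetAbar : IsUnit Abar.det := (Matrix.isUnit_iff_isUnit_det Abar).mp hmono₁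
  have hdetA : IsUnit A.det := by
    rw [hAbar, Matrix.det_fromBlocks_zero₂₁, Matrix.det_one, mul_one] at hdetAbar
    exact hdetAbar
  have hAAinv : ∀ v : Fin m → ℝ, A *ᵥ (A⁻¹ *ᵥ v) = v := by
    intro v
    rw [Matrix.mulVec_mulVec, Matrix.mul_nonsing_inv A hdetA, Matrix.one_mulVec]
  -- vectors
  set ξd : Fin k → ℝ := fun _ => (1:ℝ) with hξd
  set w : Fin m ⊕ Fin k → ℝ :=
    Sum.elim (fun i => c * (-(A⁻¹ *ᵥ (Ad *ᵥ ξd)) i)) (fun _ => c) with hw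
  set u : Fin m ⊕ Fin k → ℝ := Sum.elim ub ubd with hu
  have hAu : Abar *ᵥ u = Sum.elim F ubd := by
    rw [hAbar, hu, Matrix.fromBlocks_mulVec]
    ext j
    cases j with
    | inl j =>
      have := congrFun hsys j
      simpa using this
    | inr j => simp [Matrix.one_mulVec, hξd]
  have hAw : Abar *ᵥ w = Sum.elim (fun _ => (0:ℝ)) (fun _ => c) := by
    rw [hAbar, hw, Matrix.fromBlocks_mulVec]
    have h1 : ((Sum.elim (fun i => c * (-(A⁻¹ *ᵥ (Ad *ᵥ ξd)) i)) (fun _ => c) :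
        Fin m ⊕ Fin k → ℝ) ∘ Sum.inl) = c • (-(A⁻¹ *ᵥ (Ad *ᵥ ξd))) := by
      ext i; simp
    have h2 : ((Sum.elim (fun i => c * (-(A⁻¹ *ᵥ (Ad *ᵥ ξd)) i)) (fun _ => c) :
        Fin m ⊕ Fin k → ℝ) ∘ Sum.inr) = c • ξd := by
      ext i; simp [hξd]
    rw [h1, h2, Matrix.mulVec_smul, Matrix.mulVec_smul, Matrix.mulVec_neg, hAAinv]
    ext j
    cases j with
    | inl j => simp
    | inr j => simp [Matrix.one_mulVec, hξd]
  -- monotone application of Abar⁻¹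
  have hmonoapp : ∀ x y : Fin m ⊕ Fin k → ℝ, (∀ j, x j ≤ y j) →
      ∀ i, (Abar⁻¹ *ᵥ x) i ≤ (Abar⁻¹ *ᵥ y) i := by
    intro x y hxy i
    simp only [Matrix.mulVec, dotProduct]
    exact Finset.sum_le_sum fun j _ => mul_le_mul_of_nonneg_left (hxy j) (hmono₂ i j)
  have hinvAbar : ∀ v : Fin m ⊕ Fin k → ℝ, Abar⁻¹ *ᵥ (Abar *ᵥ v) = v := by
    intro v
    rw [Matrix.mulVec_mulVec, Matrix.nonsing_inv_mul Abar hdetAbar, Matrix.one_mulVec]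
  have hle : ∀ j, (Abar *ᵥ u) j ≤ (Abar *ᵥ w) j := by
    intro j
    rw [hAu, hAw]
    cases j with
    | inl j => simpa using hF j
    | inr j => simpa using hcub j
  have key := hmonoapp _ _ hle (Sum.inl i)
  rw [hinvAbar, hinvAbar] at key
  have hwle : w (Sum.inl i) ≤ c := by
    have := hxi i
    have h2 : -(A⁻¹ *ᵥ (Ad *ᵥ ξd)) i ≤ 1 := by
      simp only [Pi.neg_apply, hξd]
      linarith [hxi i]
    calc w (Sum.inl i) = c * (-(A⁻¹ *ᵥ (Ad *ᵥ ξd)) i) := rfl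
      _ ≤ c * 1 := mul_le_mul_of_nonneg_left h2 hc0
      _ = c := mul_one c
  exact le_trans key hwle
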